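/- Let P₁, P₂, P₃ be affinely independent points in ℝ², let K be the triangle with these vertices, |K| its two-dimensional Lebesgue measure, e = [P₁, P₂] the edge of length |e| = dist(P₁, P₂), and h_K the diameter of K. Let u : ℝ² → ℝ be continuously differentiable on a neighborhood of K, assume the mean-zero condition on the edge ∫_e u ds = 0, and assume there exist a constant c ∈ ℝ and γ ≥ 0 such that (∫_K (u(x) − c)² dx)^{1/2} ≤ γ (∫_K |∇u(x)|² dx)^{1/2}. Then ∫_e u² ds ≤ (|e|/|K|) (γ² + h_K γ) ∫_K |∇u(x)|² dx. Here ∫_e g ds denotes the line integral ∫₀¹ g(P₁ + t(P₂ − P₁)) |e| dt. -/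

import Mathlib

/-!
Put `v = u - c`. Since `u` has mean zero on `e`, `∫_e u² ≤ ∫_e v²`. The field `v² (x - P₃)` has
normal component `0` on the two edges through `P₃` and `2|K|/|e|` on `e`, so the divergence
theorem gives `(|K|/|e|) ∫_e v² = ∫_K (v² + v ∇v·(x - P₃))`. The second term is at most
`h_K ‖v‖ ‖∇v‖` by Cauchy–Schwarz, and the Poincaré bound `‖v‖ ≤ γ ‖∇u‖` finishes. The divergence
identity is obtained by differentiating `s² v(P₃ + s (y - P₃))²` along the rays from `P₃` to the
points `y ∈ e` and pulling the resulting square integral back onto `K` by the Duffy transform.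
-/

open Set MeasureTheory
open scoped RealInnerProductSpace

lemma integral_mul_le_sqrt_mul_sqrt {α : Type*} [MeasurableSpace α] {μ : Measure α}
    {f g : α → ℝ} (hf₀ : 0 ≤ᵐ[μ] f) (hg₀ : 0 ≤ᵐ[μ] g) (hf : MemLp f 2 μ) (hg : MemLp g 2 μ) :
    ∫ x, f x * g x ∂μ ≤ √(∫ x, f x ^ 2 ∂μ) * √(∫ x, g x ^ 2 ∂μ) := by
  have h := integral_mul_le_Lp_mul_Lq_of_nonneg Real.HolderConjugate.two_two hf₀ hg₀
    (by simpa using hf) (by simpa using hg)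
  simpa only [Real.sqrt_eq_rpow, ← one_div, Real.rpow_two] using h

lemma intervalIntegral.integral_sq_le_integral_sub_const_sq {f : ℝ → ℝ} {a b : ℝ} (hab : a ≤ b)
    (hf : ContinuousOn f (uIcc a b)) (hf₀ : ∫ x in a..b, f x = 0) (c : ℝ) :
    ∫ x in a..b, f x ^ 2 ≤ ∫ x in a..b, (f x - c) ^ 2 := by
  have hexpand : ∫ x in a..b, (f x - c) ^ 2 = (∫ x in a..b, f x ^ 2) + (b - a) * c ^ 2 := by
    simp_rw [sub_sq']
    rw [intervalIntegral.integral_sub, intervalIntegral.integral_add,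
      intervalIntegral.integral_mul_const, intervalIntegral.integral_const_mul, hf₀]
    · simp
    all_goals exact ContinuousOn.intervalIntegrable (by fun_prop)
  rw [hexpand]
  nlinarith [mul_nonneg (sub_nonneg.2 hab) (sq_nonneg c)]

lemma add_mul_sqrt_mul_sqrt_le {A B γ h : ℝ} (hA : 0 ≤ A) (hB : 0 ≤ B) (hh : 0 ≤ h)
    (hAB : √A ≤ γ * √B) : A + h * (√A * √B) ≤ (γ ^ 2 + h * γ) * B := by
  have hsq : A ≤ γ ^ 2 * B := by
    calc A = √A ^ 2 := (Real.sq_sqrt hA).symm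
      _ ≤ (γ * √B) ^ 2 := pow_le_pow_left₀ (Real.sqrt_nonneg A) hAB 2
      _ = γ ^ 2 * B := by rw [mul_pow, Real.sq_sqrt hB]
  have hprod : √A * √B ≤ γ * B := by
    calc √A * √B ≤ γ * √B * √B := mul_le_mul_of_nonneg_right hAB (Real.sqrt_nonneg B)
      _ = γ * B := by rw [mul_assoc, Real.mul_self_sqrt hB]
  nlinarith

lemma add_smul_sub_mem_convexHull {E : Type*} [AddCommGroup E] [Module ℝ E] {s : Set E}
    {x y : E} (hx : x ∈ s) (hy : y ∈ s) {t : ℝ} (ht : t ∈ Icc (0 : ℝ) 1) :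
    x + t • (y - x) ∈ convexHull ℝ s :=
  (convex_convexHull ℝ s).segment_subset (subset_convexHull ℝ s hx) (subset_convexHull ℝ s hy)
    (by rw [segment_eq_image']; exact mem_image_of_mem _ ht)

section InnerProductSpace

variable {E : Type*} [NormedAddCommGroup E] [InnerProductSpace ℝ E] [CompleteSpace E]

lemma gradient_sub_const (u : E → ℝ) (c : ℝ) (x : E) :
    gradient (fun y => u y - c) x = gradient u x := by
  simp only [gradient, fderiv_sub_const]

lemma ContDiffOn.continuousOn_gradient {v : E → ℝ} {U : Set E} (hv : ContDiffOn ℝ 1 v U)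
    (hU : IsOpen U) : ContinuousOn (gradient v) U :=
  (InnerProductSpace.toDual ℝ E).symm.continuous.comp_continuousOn
    (hv.continuousOn_fderiv_of_isOpen hU le_rfl)

/-- In the plane this is half the divergence of `v x ^ 2 • (x - p)`, so its integral over a
triangle with vertex `p` is a multiple of the integral of `v ^ 2` over the opposite edge. -/
noncomputable def traceIntegrand (v : E → ℝ) (p x : E) : ℝ :=
  v x ^ 2 + v x * ⟪gradient v x, x - p⟫

lemma ContDiffOn.continuousOn_traceIntegrand {v : E → ℝ} {U : Set E} (hv : ContDiffOn ℝ 1 v U)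
    (hU : IsOpen U) (p : E) : ContinuousOn (traceIntegrand v p) U :=
  (hv.continuousOn.pow 2).add
    (hv.continuousOn.mul ((hv.continuousOn_gradient hU).inner (by fun_prop)))

lemma hasDerivAt_sq_mul_sq_comp_ray {v : E → ℝ} {p d : E} {s : ℝ}
    (hv : DifferentiableAt ℝ v (p + s • d)) :
    HasDerivAt (fun r : ℝ => r ^ 2 * v (p + r • d) ^ 2)
      (2 * s * traceIntegrand v p (p + s • d)) s := by
  have hray : HasDerivAt (fun r : ℝ => p + r • d) d s := by
    simpa using ((hasDerivAt_id s).smul_const d).const_add p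
  have hvray : HasDerivAt (fun r : ℝ => v (p + r • d)) ⟪gradient v (p + s • d), d⟫ s := by
    rw [gradient, InnerProductSpace.toDual_symm_apply]
    exact hv.hasFDerivAt.comp_hasDerivAt s hray
  refine ((hasDerivAt_pow 2 s).mul (hvray.pow 2)).congr_deriv ?_
  simp only [traceIntegrand, add_sub_cancel_left, inner_smul_right, Pi.pow_apply]
  ring

lemma sq_eq_integral_traceIntegrand_ray {v : E → ℝ} {U : Set E} (hU : IsOpen U)
    (hv : ContDiffOn ℝ 1 v U) {p d : E} (hray : MapsTo (fun s : ℝ => p + s • d) (Icc 0 1) U) :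
    v (p + d) ^ 2 = ∫ s in (0 : ℝ)..1, 2 * s * traceIntegrand v p (p + s • d) := by
  rw [← uIcc_of_le zero_le_one] at hray
  have hderiv : ∀ s ∈ uIcc (0 : ℝ) 1, HasDerivAt (fun r : ℝ => r ^ 2 * v (p + r • d) ^ 2)
      (2 * s * traceIntegrand v p (p + s • d)) s := fun s hs =>
    hasDerivAt_sq_mul_sq_comp_ray
      ((hv.contDiffAt (hU.mem_nhds (hray hs))).differentiableAt one_ne_zero)
  have hcont : ContinuousOn (fun s => 2 * s * traceIntegrand v p (p + s • d)) (uIcc 0 1) :=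
    (continuousOn_const.mul continuousOn_id).mul
      ((hv.continuousOn_traceIntegrand hU p).comp (by fun_prop) hray)
  rw [intervalIntegral.integral_eq_sub_of_hasDerivAt hderiv hcont.intervalIntegrable]
  simp

lemma integral_traceIntegrand_le [MeasurableSpace E] [BorelSpace E] (μ : Measure E)
    [IsFiniteMeasureOnCompacts μ] {K : Set E} (hK : IsCompact K) {p : E} (hp : p ∈ K)
    {v : E → ℝ} (hv : ContinuousOn v K) (hgrad : ContinuousOn (gradient v) K) :
    ∫ x in K, traceIntegrand v p x ∂μ ≤ ∫ x in K, v x ^ 2 ∂μ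
      + Metric.diam K * (√(∫ x in K, v x ^ 2 ∂μ) * √(∫ x in K, ‖gradient v x‖ ^ 2 ∂μ)) := by
  have hKm : MeasurableSet K := hK.isClosed.measurableSet
  have hint : ∀ {f : E → ℝ}, ContinuousOn f K → IntegrableOn f K μ := fun hf =>
    hf.integrableOn_compact hK
  have hL2 : ∀ {f : E → ℝ}, ContinuousOn f K → MemLp f 2 (μ.restrict K) := fun hf =>
    (memLp_two_iff_integrable_sq (hf.aestronglyMeasurable hKm)).2 (hint (hf.pow 2))
  have hinner : ContinuousOn (fun x => ⟪gradient v x, x - p⟫) K := hgrad.inner (by fun_prop)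
  have hpoint : ∀ x ∈ K,
      v x * ⟪gradient v x, x - p⟫ ≤ Metric.diam K * (|v x| * ‖gradient v x‖) := by
    intro x hx
    have hdist : ‖x - p‖ ≤ Metric.diam K := by
      rw [← dist_eq_norm]
      exact Metric.dist_le_diam_of_mem hK.isBounded hx hp
    calc v x * ⟪gradient v x, x - p⟫ ≤ |v x| * |⟪gradient v x, x - p⟫| := by
          rw [← abs_mul]
          exact le_abs_self _
      _ ≤ |v x| * (‖gradient v x‖ * Metric.diam K) := by
          gcongr
          exact (abs_real_inner_le_norm _ _).trans (by gcongr)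
      _ = Metric.diam K * (|v x| * ‖gradient v x‖) := by ring
  have hcs := integral_mul_le_sqrt_mul_sqrt (ae_of_all _ fun x => abs_nonneg (v x))
    (ae_of_all _ fun x => norm_nonneg (gradient v x)) (hL2 hv.abs) (hL2 hgrad.norm)
  simp only [sq_abs] at hcs
  calc ∫ x in K, traceIntegrand v p x ∂μ
      = ∫ x in K, v x ^ 2 ∂μ + ∫ x in K, v x * ⟪gradient v x, x - p⟫ ∂μ :=
        integral_add (hint (hv.pow 2)) (hint (hv.mul hinner))
    _ ≤ ∫ x in K, v x ^ 2 ∂μ + ∫ x in K, Metric.diam K * (|v x| * ‖gradient v x‖) ∂μ :=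
        add_le_add_right (setIntegral_mono_on (hint (hv.mul hinner))
          (hint (continuousOn_const.mul (hv.abs.mul hgrad.norm))) hKm hpoint) _
    _ ≤ _ := by
        rw [integral_const_mul]
        gcongr

end InnerProductSpace

local notation "ℝ²" => EuclideanSpace ℝ (Fin 2)

section Triangle

variable {P₁ P₂ P₃ : ℝ²}

def unitSquare : Set ℝ² := {w | w 0 ∈ Ioo 0 1 ∧ w 1 ∈ Ioo 0 1}

lemma measurableSet_unitSquare : MeasurableSet unitSquare :=
  (measurableSet_Ioo.preimage (by fun_prop)).inter (measurableSet_Ioo.preimage (by fun_prop))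

lemma setIntegral_unitSquare (F : ℝ² → ℝ) :
    ∫ w in unitSquare, F w = ∫ p in Ioo (0 : ℝ) 1 ×ˢ Ioo (0 : ℝ) 1, F !₂[p.1, p.2] := by
  let e : ℝ × ℝ ≃ᵐ ℝ² :=
    MeasurableEquiv.finTwoArrow.symm.trans (MeasurableEquiv.toLp 2 (Fin 2 → ℝ))
  have he : MeasurePreserving e :=
    (PiLp.volume_preserving_toLp (Fin 2)).comp ((volume_preserving_finTwoArrow ℝ).symm _)
  rw [← he.setIntegral_preimage_emb e.measurableEmbedding]
  rfl

lemma integral_unitSquare_coord_one : ∫ w in unitSquare, w 1 = 1 / 2 := by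
  have hid : ∫ y in Ioo (0 : ℝ) 1, y = 1 / 2 := by
    rw [← integral_Ioc_eq_integral_Ioo, ← intervalIntegral.integral_of_le zero_le_one,
      integral_id]
    norm_num
  have h := setIntegral_prod_mul (μ := volume) (ν := volume) (fun _ : ℝ => (1 : ℝ)) (fun y => y)
    (Ioo 0 1) (Ioo 0 1)
  rw [← Measure.volume_eq_prod] at h
  simpa [setIntegral_unitSquare, hid] using h

/-- The Duffy transform of the unit square onto the triangle `P₁ P₂ P₃`: it collapses the side
`w 1 = 0` onto `P₃`; `w 0` runs parallel to the edge `[P₁, P₂]` and `w 1` along the rays from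
`P₃`. -/
noncomputable def duffy (P₁ P₂ P₃ w : ℝ²) : ℝ² :=
  P₃ + w 1 • (P₁ - P₃ + w 0 • (P₂ - P₁))

lemma duffy_toLp (t s : ℝ) :
    duffy P₁ P₂ P₃ !₂[t, s] = P₃ + s • (P₁ - P₃ + t • (P₂ - P₁)) :=
  rfl

noncomputable def duffyDeriv (P₁ P₂ P₃ w : ℝ²) : ℝ² →L[ℝ] ℝ² :=
  w 1 • (EuclideanSpace.proj 0 : ℝ² →L[ℝ] ℝ).smulRight (P₂ - P₁)
    + (EuclideanSpace.proj 1 : ℝ² →L[ℝ] ℝ).smulRight (P₁ - P₃ + w 0 • (P₂ - P₁))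

lemma hasFDerivAt_duffy (w : ℝ²) : HasFDerivAt (duffy P₁ P₂ P₃) (duffyDeriv P₁ P₂ P₃ w) w := by
  have h0 := (EuclideanSpace.proj 0 : ℝ² →L[ℝ] ℝ).hasFDerivAt (x := w)
  have h1 := (EuclideanSpace.proj 1 : ℝ² →L[ℝ] ℝ).hasFDerivAt (x := w)
  exact (h1.smul ((h0.smul_const (P₂ - P₁)).const_add (P₁ - P₃))).const_add P₃

def doubleSignedArea (P₁ P₂ P₃ : ℝ²) : ℝ :=
  (P₂ - P₁) 0 * (P₁ - P₃) 1 - (P₂ - P₁) 1 * (P₁ - P₃) 0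

lemma det_duffyDeriv (w : ℝ²) :
    (duffyDeriv P₁ P₂ P₃ w).det = w 1 * doubleSignedArea P₁ P₂ P₃ := by
  rw [ContinuousLinearMap.det, ← LinearMap.det_toMatrix (PiLp.basisFun 2 ℝ (Fin 2)),
    Matrix.det_fin_two]
  simp [LinearMap.toMatrix_apply, duffyDeriv, doubleSignedArea]
  ring

section AffineIndependent

variable (hind : AffineIndependent ℝ ![P₁, P₂, P₃])
include hind

def triangleBasis : AffineBasis (Fin 3) ℝ ℝ² :=
  ⟨![P₁, P₂, P₃], hind, by
    rw [hind.affineSpan_eq_top_iff_card_eq_finrank_add_one]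
    simp [finrank_euclideanSpace]⟩

lemma coe_triangleBasis : ⇑(triangleBasis hind) = ![P₁, P₂, P₃] :=
  rfl

lemma range_triangleBasis : range (triangleBasis hind) = {P₁, P₂, P₃} := by
  simp only [coe_triangleBasis, Matrix.range_cons, Matrix.range_empty, union_empty,
    singleton_union]

lemma convexHull_triangle :
    convexHull ℝ {P₁, P₂, P₃} = {x | ∀ i, 0 ≤ (triangleBasis hind).coord i x} := by
  rw [← range_triangleBasis hind, AffineBasis.convexHull_eq_nonneg_coord]

lemma interior_convexHull_triangle :
    interior (convexHull ℝ {P₁, P₂, P₃}) = {x | ∀ i, 0 < (triangleBasis hind).coord i x} := by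
  rw [← range_triangleBasis hind, AffineBasis.interior_convexHull]

lemma triangleBasis_coord_duffy (w : ℝ²) (i : Fin 3) :
    (triangleBasis hind).coord i (duffy P₁ P₂ P₃ w)
      = ![w 1 - w 1 * w 0, w 1 * w 0, 1 - w 1] i := by
  have hsum : ∑ j, ![w 1 - w 1 * w 0, w 1 * w 0, 1 - w 1] j = 1 := by
    simp [Fin.sum_univ_three]
  have hcomb : duffy P₁ P₂ P₃ w = Finset.univ.affineCombination ℝ (triangleBasis hind)
      ![w 1 - w 1 * w 0, w 1 * w 0, 1 - w 1] := by
    rw [Finset.univ.affineCombination_eq_linear_combination _ _ hsum]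
    simp only [Fin.sum_univ_three, duffy, coe_triangleBasis, Matrix.cons_val_zero,
      Matrix.cons_val_one, Matrix.cons_val]
    module
  rw [hcomb, (triangleBasis hind).coord_apply_combination_of_mem (Finset.mem_univ i) hsum]

lemma duffy_mem_convexHull {w : ℝ²} (h0 : w 0 ∈ Icc 0 1) (h1 : w 1 ∈ Icc 0 1) :
    duffy P₁ P₂ P₃ w ∈ convexHull ℝ {P₁, P₂, P₃} := by
  rw [convexHull_triangle hind]
  intro i
  rw [triangleBasis_coord_duffy]
  obtain ⟨h00, h01⟩ := h0
  obtain ⟨h10, h11⟩ := h1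
  fin_cases i <;>
    simp only [Fin.zero_eta, Fin.mk_one, Fin.reduceFinMk, Matrix.cons_val_zero,
      Matrix.cons_val_one, Matrix.cons_val] <;>
    nlinarith

lemma duffy_image_unitSquare :
    duffy P₁ P₂ P₃ '' unitSquare = interior (convexHull ℝ {P₁, P₂, P₃}) := by
  rw [interior_convexHull_triangle hind]
  ext x
  constructor
  · rintro ⟨w, ⟨⟨h00, h01⟩, h10, h11⟩, rfl⟩ i
    rw [triangleBasis_coord_duffy]
    fin_cases i <;>
      simp only [Fin.zero_eta, Fin.mk_one, Fin.reduceFinMk, Matrix.cons_val_zero,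
        Matrix.cons_val_one, Matrix.cons_val] <;>
      nlinarith
  · intro hx
    set b := triangleBasis hind
    have hsum := b.sum_coord_apply_eq_one x
    rw [Fin.sum_univ_three] at hsum
    have h0 := hx 0
    have h1 := hx 1
    have h2 := hx 2
    have hs : 0 < b.coord 0 x + b.coord 1 x := by linarith
    refine ⟨!₂[b.coord 1 x / (b.coord 0 x + b.coord 1 x), b.coord 0 x + b.coord 1 x],
      ⟨?_, ?_⟩, b.ext_elem fun i => ?_⟩
    · simp only [Matrix.cons_val_zero, mem_Ioo]
      exact ⟨by positivity, (div_lt_one hs).2 (by linarith)⟩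
    · simp only [Matrix.cons_val_one, Matrix.cons_val_fin_one, mem_Ioo]
      constructor <;> linarith
    · rw [triangleBasis_coord_duffy]
      fin_cases i <;>
        simp only [Fin.zero_eta, Fin.mk_one, Fin.reduceFinMk, Matrix.cons_val_zero,
          Matrix.cons_val_one, Matrix.cons_val] <;>
        field_simp <;> linarith

lemma injOn_duffy : InjOn (duffy P₁ P₂ P₃) unitSquare := by
  rintro w ⟨-, hw1, -⟩ w' - heq
  have c1 := congrArg ((triangleBasis hind).coord 1) heq
  have c2 := congrArg ((triangleBasis hind).coord 2) heq
  simp only [triangleBasis_coord_duffy, Matrix.cons_val_one, Matrix.cons_val_zero,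
    Matrix.cons_val, sub_right_inj] at c1 c2
  have h1 : w 1 = w' 1 := by linarith
  have h0 : w 0 = w' 0 := mul_left_cancel₀ hw1.ne' (by rw [c1, h1])
  ext i
  fin_cases i
  exacts [h0, h1]

lemma integral_convexHull_triangle (g : ℝ² → ℝ) :
    ∫ x in convexHull ℝ {P₁, P₂, P₃}, g x
      = |doubleSignedArea P₁ P₂ P₃| * ∫ w in unitSquare, w 1 * g (duffy P₁ P₂ P₃ w) := by
  have hae : interior (convexHull ℝ {P₁, P₂, P₃}) =ᵐ[volume] convexHull ℝ {P₁, P₂, P₃} :=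
    interior_ae_eq_of_null_frontier ((convex_convexHull ℝ _).addHaar_frontier volume)
  rw [← setIntegral_congr_set hae, ← duffy_image_unitSquare hind,
    integral_image_eq_integral_abs_det_fderiv_smul volume measurableSet_unitSquare
      (fun w _ => hasFDerivAt_duffy w |>.hasFDerivWithinAt) (injOn_duffy hind) g,
    ← integral_const_mul]
  refine setIntegral_congr_fun measurableSet_unitSquare fun w hw => ?_
  rw [det_duffyDeriv, abs_mul, abs_of_pos hw.2.1, smul_eq_mul]
  ring

lemma volume_convexHull_triangle :
    (volume (convexHull ℝ {P₁, P₂, P₃})).toReal = |doubleSignedArea P₁ P₂ P₃| / 2 := by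
  simpa [Measure.real, integral_unitSquare_coord_one, div_eq_mul_inv]
    using integral_convexHull_triangle hind (fun _ => 1)

lemma volume_convexHull_triangle_pos : 0 < (volume (convexHull ℝ {P₁, P₂, P₃})).toReal := by
  have hne : (interior (convexHull ℝ {P₁, P₂, P₃})).Nonempty := by
    rw [← range_triangleBasis hind]
    exact ⟨_, (triangleBasis hind).centroid_mem_interior_convexHull⟩
  exact ENNReal.toReal_pos
    ((isOpen_interior.measure_pos volume hne).trans_le (measure_mono interior_subset)).ne'
    ((toFinite {P₁, P₂, P₃}).isCompact_convexHull (𝕜 := ℝ)).measure_lt_top.ne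

lemma integral_edge_sq_eq_integral_unitSquare {U : Set ℝ²} (hU : IsOpen U)
    (hKU : convexHull ℝ {P₁, P₂, P₃} ⊆ U) {v : ℝ² → ℝ} (hv : ContDiffOn ℝ 1 v U) :
    ∫ t in (0 : ℝ)..1, v (P₁ + t • (P₂ - P₁)) ^ 2
      = 2 * ∫ w in unitSquare, w 1 * traceIntegrand v P₃ (duffy P₁ P₂ P₃ w) := by
  set G : ℝ × ℝ → ℝ := fun q => 2 * q.2 * traceIntegrand v P₃ (duffy P₁ P₂ P₃ !₂[q.1, q.2])
  have hmem : MapsTo (fun q : ℝ × ℝ => duffy P₁ P₂ P₃ !₂[q.1, q.2]) (Icc 0 1 ×ˢ Icc 0 1) U :=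
    fun q hq => hKU (duffy_mem_convexHull hind hq.1 hq.2)
  have hray : ∀ t ∈ Ioo (0 : ℝ) 1,
      v (P₁ + t • (P₂ - P₁)) ^ 2 = ∫ s in Ioo (0 : ℝ) 1, G (t, s) := by
    intro t ht
    have hedge : P₁ + t • (P₂ - P₁) = P₃ + (P₁ - P₃ + t • (P₂ - P₁)) := by abel
    rw [hedge, sq_eq_integral_traceIntegrand_ray hU hv
      (fun s hs => hmem (mk_mem_prod (Ioo_subset_Icc_self ht) hs)),
      intervalIntegral.integral_of_le zero_le_one, integral_Ioc_eq_integral_Ioo]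
    rfl
  have hG : IntegrableOn G (Icc 0 1 ×ˢ Icc 0 1) :=
    ((continuousOn_const.mul continuous_snd.continuousOn).mul
      ((hv.continuousOn_traceIntegrand hU P₃).comp (by simp only [duffy_toLp]; fun_prop) hmem)
      ).integrableOn_compact (isCompact_Icc.prod isCompact_Icc)
  rw [intervalIntegral.integral_of_le zero_le_one, integral_Ioc_eq_integral_Ioo,
    setIntegral_congr_fun measurableSet_Ioo hray, setIntegral_unitSquare, ← integral_const_mul,
    Measure.volume_eq_prod, ← setIntegral_prod _ ?_]
  · congr 1 with q
    simp only [G, mul_assoc]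
    rfl
  · exact hG.mono_set (prod_mono Ioo_subset_Icc_self Ioo_subset_Icc_self)

lemma integral_edge_sq_eq_integral_traceIntegrand {U : Set ℝ²} (hU : IsOpen U)
    (hKU : convexHull ℝ {P₁, P₂, P₃} ⊆ U) {v : ℝ² → ℝ} (hv : ContDiffOn ℝ 1 v U) :
    ∫ t in (0 : ℝ)..1, v (P₁ + t • (P₂ - P₁)) ^ 2
      = (volume (convexHull ℝ {P₁, P₂, P₃})).toReal⁻¹
          * ∫ x in convexHull ℝ {P₁, P₂, P₃}, traceIntegrand v P₃ x := by
  have hvol := volume_convexHull_triangle_pos hind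
  have harea :
      |doubleSignedArea P₁ P₂ P₃| = 2 * (volume (convexHull ℝ {P₁, P₂, P₃})).toReal := by
    rw [volume_convexHull_triangle hind]
    ring
  rw [integral_edge_sq_eq_integral_unitSquare hind hU hKU hv, integral_convexHull_triangle hind,
    harea]
  field_simp

lemma integral_edge_sq_le {U : Set ℝ²} (hU : IsOpen U) (hKU : convexHull ℝ {P₁, P₂, P₃} ⊆ U)
    {v : ℝ² → ℝ} (hv : ContDiffOn ℝ 1 v U) :
    ∫ t in (0 : ℝ)..1, v (P₁ + t • (P₂ - P₁)) ^ 2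
      ≤ (volume (convexHull ℝ {P₁, P₂, P₃})).toReal⁻¹
          * ((∫ x in convexHull ℝ {P₁, P₂, P₃}, v x ^ 2)
            + Metric.diam (convexHull ℝ {P₁, P₂, P₃})
              * (√(∫ x in convexHull ℝ {P₁, P₂, P₃}, v x ^ 2)
                * √(∫ x in convexHull ℝ {P₁, P₂, P₃}, ‖gradient v x‖ ^ 2))) := by
  rw [integral_edge_sq_eq_integral_traceIntegrand hind hU hKU hv]
  gcongr
  exact integral_traceIntegrand_le volume ((toFinite {P₁, P₂, P₃}).isCompact_convexHull (𝕜 := ℝ))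
    (subset_convexHull ℝ _ (by simp)) (hv.continuousOn.mono hKU)
    ((hv.continuousOn_gradient hU).mono hKU)

end AffineIndependent

end Triangle

theorem conditional_trace_estimate_general
    (P₁ P₂ P₃ : EuclideanSpace ℝ (Fin 2))
    (hind : AffineIndependent ℝ ![P₁, P₂, P₃])
    (u : EuclideanSpace ℝ (Fin 2) → ℝ)
    (U : Set (EuclideanSpace ℝ (Fin 2))) (hU : IsOpen U)
    (hKU : convexHull ℝ {P₁, P₂, P₃} ⊆ U)
    (hu : ContDiffOn ℝ 1 u U)
    (hmean : (∫ t in (0:ℝ)..1, u (P₁ + t • (P₂ - P₁)) * dist P₁ P₂) = 0)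
    (c γ : ℝ)
    (hpoincare : Real.sqrt (∫ x in convexHull ℝ {P₁, P₂, P₃}, (u x - c) ^ 2)
        ≤ γ * Real.sqrt (∫ x in convexHull ℝ {P₁, P₂, P₃}, ‖gradient u x‖ ^ 2)) :
    (∫ t in (0:ℝ)..1, u (P₁ + t • (P₂ - P₁)) ^ 2 * dist P₁ P₂)
      ≤ (dist P₁ P₂ / (volume (convexHull ℝ {P₁, P₂, P₃})).toReal)
          * (γ ^ 2
              + Metric.diam (convexHull ℝ ({P₁, P₂, P₃} : Set (EuclideanSpace ℝ (Fin 2)))) * γ)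
          * ∫ x in convexHull ℝ {P₁, P₂, P₃}, ‖gradient u x‖ ^ 2 := by
  have hedge : MapsTo (fun t : ℝ => P₁ + t • (P₂ - P₁)) (uIcc 0 1) U := fun t ht =>
    hKU (add_smul_sub_mem_convexHull (by simp) (by simp) (uIcc_of_le (zero_le_one' ℝ) ▸ ht))
  have hP₁₂ : dist P₁ P₂ ≠ 0 :=
    dist_ne_zero.2 (by simpa using hind.injective.ne (show (0 : Fin 3) ≠ 1 by decide))
  have hmean₀ : ∫ t in (0 : ℝ)..1, u (P₁ + t • (P₂ - P₁)) = 0 := by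
    rw [intervalIntegral.integral_mul_const] at hmean
    exact (mul_eq_zero.1 hmean).resolve_right hP₁₂
  have htrace := integral_edge_sq_le hind hU hKU (hu.sub (contDiffOn_const (c := c)))
  rw [funext (gradient_sub_const u c)] at htrace
  calc (∫ t in (0 : ℝ)..1, u (P₁ + t • (P₂ - P₁)) ^ 2 * dist P₁ P₂)
      = dist P₁ P₂ * ∫ t in (0 : ℝ)..1, u (P₁ + t • (P₂ - P₁)) ^ 2 := by
        rw [intervalIntegral.integral_mul_const, mul_comm]
    _ ≤ dist P₁ P₂ * ∫ t in (0 : ℝ)..1, (u (P₁ + t • (P₂ - P₁)) - c) ^ 2 := by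
        gcongr
        exact intervalIntegral.integral_sq_le_integral_sub_const_sq zero_le_one
          (hu.continuousOn.comp (by fun_prop) hedge) hmean₀ c
    _ ≤ _ := by
        grw [htrace, add_mul_sqrt_mul_sqrt_le (integral_nonneg fun x => sq_nonneg _)
          (integral_nonneg fun x => sq_nonneg _) Metric.diam_nonneg hpoincare]
        exact le_of_eq (by ring)

/-- Conditional trace estimate (final step in the proof of Theorem 4.1): if `u` has
mean zero on the edge `e = [P₁, P₂]` of the triangle `K` and satisfies a
Poincaré-type bound `‖u − c‖_{L²(K)} ≤ γ ‖∇u‖_{L²(K)}` for some constant `c` and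
`γ ≥ 0`, then `∫_e u² ds ≤ (|e|/|K|)(γ² + h_K γ) ∫_K |∇u|²`. -/
theorem conditional_trace_estimate
    (P₁ P₂ P₃ : EuclideanSpace ℝ (Fin 2))
    (hind : AffineIndependent ℝ ![P₁, P₂, P₃])
    (u : EuclideanSpace ℝ (Fin 2) → ℝ)
    (U : Set (EuclideanSpace ℝ (Fin 2))) (hU : IsOpen U)
    (hKU : convexHull ℝ {P₁, P₂, P₃} ⊆ U)
    (hu : ContDiffOn ℝ 1 u U)
    (hmean : (∫ t in (0:ℝ)..1, u (P₁ + t • (P₂ - P₁)) * dist P₁ P₂) = 0)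
    (c γ : ℝ) (hγ : 0 ≤ γ)
    (hpoincare : Real.sqrt (∫ x in convexHull ℝ {P₁, P₂, P₃}, (u x - c) ^ 2)
        ≤ γ * Real.sqrt (∫ x in convexHull ℝ {P₁, P₂, P₃}, ‖gradient u x‖ ^ 2)) :
    (∫ t in (0:ℝ)..1, u (P₁ + t • (P₂ - P₁)) ^ 2 * dist P₁ P₂)
      ≤ (dist P₁ P₂ / (volume (convexHull ℝ {P₁, P₂, P₃})).toReal)
          * (γ ^ 2
              + Metric.diam (convexHull ℝ ({P₁, P₂, P₃} : Set (EuclideanSpace ℝ (Fin 2)))) * γ)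
          * ∫ x in convexHull ℝ {P₁, P₂, P₃}, ‖gradient u x‖ ^ 2 :=
  conditional_trace_estimate_general P₁ P₂ P₃ hind u U hU hKU hu hmean c γ hpoincare
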